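/- arXiv:0805.1763 — 3 statements merged into one kernel-verified Lean document; each statement's English description precedes it below -/
import Mathlib

section
/- For a Hermitian matrix A diagonalized with diagonal entries ε_1,…,ε_{n+1} ∈ {−1, 0, 1}, the quadratic form ρ(z) = Σ_j ε_j |z_j|² satisfies the Levi-flatness condition (every 3×3 subdeterminant of the bordered Hessian [[ρ, ρ_z],[ρ_{z̄}, ρ_{zz̄}]] vanishes on {ρ = 0}) if and only if at most two of the ε_j are nonzero. -/
/-- For `ρ(z) = Σ εⱼ |zⱼ|²` with `εⱼ ∈ {-1,0,1}`, the Levi-flatness condition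
(the bordered Hessian has rank ≤ 2, i.e. all 3×3 subdeterminants vanish, on
`{ρ = 0}`) holds iff at most two of the `εⱼ` are nonzero. -/
theorem stmt_8 (n : ℕ) (ε : Fin (n+1) → ℝ)
    (hε : ∀ j, ε j = -1 ∨ ε j = 0 ∨ ε j = 1)
    (ρ : (Fin (n+1) → ℂ) → ℂ)
    (hρ : ∀ z, ρ z = ∑ j, (ε j : ℂ) * (z j * star (z j)))
    (M : (Fin (n+1) → ℂ) → Matrix (Unit ⊕ Fin (n+1)) (Unit ⊕ Fin (n+1)) ℂ)
    (hM : ∀ z, M z = Matrix.of (fun i j =>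
      match i, j with
      | Sum.inl _, Sum.inl _ => ρ z
      | Sum.inl _, Sum.inr k => (ε k : ℂ) * star (z k)
      | Sum.inr k, Sum.inl _ => (ε k : ℂ) * z k
      | Sum.inr k, Sum.inr l => if k = l then (ε k : ℂ) else 0)) :
    (∀ z, ρ z = 0 → (M z).rank ≤ 2) ↔ Nat.card {j // ε j ≠ 0} ≤ 2 := by
  have hcard : Nat.card {j // ε j ≠ 0} = Fintype.card {j // ε j ≠ 0} :=
    Nat.card_eq_fintype_card
  constructor
  · intro h
    -- evaluate at z = 0
    have hρ0 : ρ 0 = 0 := by simp [hρ]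
    have h0 := h 0 hρ0
    -- M 0 is diagonal
    set d : Unit ⊕ Fin (n+1) → ℂ := fun i => match i with
      | Sum.inl _ => 0
      | Sum.inr k => (ε k : ℂ) with hd
    have hMd : M 0 = Matrix.diagonal d := by
      rw [hM]
      ext i j
      match i, j with
      | Sum.inl u, Sum.inl v =>
        simp [Matrix.diagonal, hρ0, hd]
      | Sum.inl u, Sum.inr k => simp [Matrix.diagonal, hd]
      | Sum.inr k, Sum.inl u => simp [Matrix.diagonal, hd]
      | Sum.inr k, Sum.inr l =>
        by_cases hkl : k = l <;> simp [Matrix.diagonal, hd, hkl]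
    rw [hMd, Matrix.rank_diagonal] at h0
    have hequiv : {i // d i ≠ 0} ≃ {j // ε j ≠ 0} :=
      { toFun := fun x => match x with
          | ⟨Sum.inl u, hx⟩ => absurd rfl hx
          | ⟨Sum.inr k, hx⟩ => ⟨k, fun hc => hx (by simp [hd, hc])⟩
        invFun := fun x => ⟨Sum.inr x.1, by
          simpa [hd] using Complex.ofReal_ne_zero.mpr x.2⟩
        left_inv := fun x => match x with
          | ⟨Sum.inl u, hx⟩ => absurd rfl hx
          | ⟨Sum.inr k, hx⟩ => rfl
        right_inv := fun x => rfl }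
    rw [hcard, ← Fintype.card_congr hequiv]
    exact h0
  · intro h z hz
    classical
    -- factor M z = B * C with middle dimension {j // ε j ≠ 0}
    set S := {j // ε j ≠ 0} with hS
    set B : Matrix (Unit ⊕ Fin (n+1)) S ℂ := Matrix.of (fun i k =>
      match i with
      | Sum.inl _ => star (z k.1)
      | Sum.inr l => if l = k.1 then 1 else 0) with hB
    set C : Matrix S (Unit ⊕ Fin (n+1)) ℂ := Matrix.of (fun k j => M z (Sum.inr k.1) j)
      with hC
    have key : ∀ (f : Fin (n+1) → ℂ), (∀ j, ε j = 0 → f j = 0) →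
        ∑ k : S, f k.1 = ∑ j, f j := by
      intro f hf
      have h1 : ∑ j, f j = ∑ j ∈ Finset.univ.filter (fun j => ε j ≠ 0), f j := by
        rw [Finset.sum_filter_of_ne]
        intro j _ h'
        by_contra hc
        exact h' (hf j hc)
      rw [h1]
      exact (Finset.sum_subtype _ (by simp) f).symm
    have hfac : M z = B * C := by
      ext i j
      rw [Matrix.mul_apply]
      match i, j with
      | Sum.inl u, Sum.inl v =>
        have : ∑ k : S, B (Sum.inl u) k * C k (Sum.inl v)
            = ∑ k : S, (ε k.1 : ℂ) * (z k.1 * star (z k.1)) := by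
          apply Finset.sum_congr rfl; intro k _
          simp [hB, hC, hM]; ring
        rw [this, key (fun j => (ε j : ℂ) * (z j * star (z j)))
          (by intro j hj; simp [hj]), ← hρ z, hM]
        rfl
      | Sum.inl u, Sum.inr l =>
        by_cases hl : ε l ≠ 0
        · rw [Finset.sum_eq_single (⟨l, hl⟩ : S)]
          · simp [hB, hC, hM]; ring
          · intro k _ hk
            have : l ≠ k.1 := fun hc => hk (Subtype.ext hc.symm)
            simp [hB, hC, hM, this.symm]
          · simp
        · push_neg at hl
          have : ∀ k : S, B (Sum.inl u) k * C k (Sum.inr l) = 0 := by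
            intro k
            have : k.1 ≠ l := fun hc => k.2 (hc ▸ hl)
            simp [hB, hC, hM, this]
          simp only [this, Finset.sum_const_zero, hM, Matrix.of_apply, hl]
          simp
      | Sum.inr m, Sum.inl v =>
        by_cases hm : ε m ≠ 0
        · rw [Finset.sum_eq_single (⟨m, hm⟩ : S)]
          · simp [hB, hC, hM]
          · intro k _ hk
            have : m ≠ k.1 := fun hc => hk (Subtype.ext hc.symm)
            simp [hB, hC, this]
          · simp
        · push_neg at hm
          have : ∀ k : S, B (Sum.inr m) k * C k (Sum.inl v) = 0 := by
            intro k
            have : m ≠ k.1 := fun hc => k.2 (hc ▸ hm)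
            simp [hB, this]
          simp only [this, Finset.sum_const_zero, hM, Matrix.of_apply, hm]
          simp
      | Sum.inr m, Sum.inr l =>
        by_cases hm : ε m ≠ 0
        · rw [Finset.sum_eq_single (⟨m, hm⟩ : S)]
          · simp [hB, hC, hM]
          · intro k _ hk
            have : m ≠ k.1 := fun hc => hk (Subtype.ext hc.symm)
            simp [hB, hC, this]
          · simp
        · push_neg at hm
          have h1 : ∀ k : S, B (Sum.inr m) k * C k (Sum.inr l) = 0 := by
            intro k
            have : m ≠ k.1 := fun hc => k.2 (hc ▸ hm)
            simp [hB, this]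
          have h2 : (if m = l then (ε m : ℂ) else 0) = 0 := by
            by_cases hml : m = l
            · subst hml; simp [hm]
            · simp [hml]
          simp only [h1, Finset.sum_const_zero, hM, Matrix.of_apply]
          exact h2
    calc (M z).rank ≤ C.rank := by rw [hfac]; exact Matrix.rank_mul_le_right B C
      _ ≤ Fintype.card S := Matrix.rank_le_card_height C
      _ ≤ 2 := by rw [hcard] at h; exact h
end

section
/- Let H = {(z_1,z_2,z_3) ∈ ℂ³ : z_1 + x z_2 + y z_3 = 0 for some real x, y with x² + y² = 1}. Writing z_j = s_j + i t_j, the set H is exactly the real algebraic set defined by (s_3 t_1 − s_1 t_3)² + (s_2 t_1 − s_1 t_2)² = (s_3 t_2 − s_2 t_3)², at least at all points where s_3 t_2 − s_2 t_3 ≠ 0. -/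
/-! Since `x` and `y` are real, the complex equation `z₁ + x z₂ + y z₃ = 0` is the real
`2 × 2` system `s₂ x + s₃ y = -s₁`, `t₂ x + t₃ y = -t₁`. Its determinant `s₂t₃ - s₃t₂` is
nonzero, so Cramer's rule gives the unique solution `x = (s₃t₁ - s₁t₃)/Δ`,
`y = (s₁t₂ - s₂t₁)/Δ`, and this point lies on the unit circle exactly when the stated
quartic equation holds. -/

theorem Complex.add_ofReal_mul_add_ofReal_mul_eq_zero_iff (z₁ z₂ z₃ : ℂ) (x y : ℝ) :
    z₁ + x * z₂ + y * z₃ = 0 ↔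
      z₂.re * x + z₃.re * y = -z₁.re ∧ z₂.im * x + z₃.im * y = -z₁.im := by
  simp only [Complex.ext_iff, Complex.add_re, Complex.add_im, Complex.re_ofReal_mul,
    Complex.im_ofReal_mul, Complex.zero_re, Complex.zero_im]
  constructor <;> rintro ⟨h₁, h₂⟩
  · exact ⟨by linear_combination h₁, by linear_combination h₂⟩
  · exact ⟨by linear_combination h₁, by linear_combination h₂⟩

theorem linear_system_two_iff_cramer {K : Type*} [Field K] {a b c d e f x y : K}
    (hdet : a * d - b * c ≠ 0) :
    a * x + b * y = e ∧ c * x + d * y = f ↔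
      x = (e * d - b * f) / (a * d - b * c) ∧ y = (a * f - e * c) / (a * d - b * c) := by
  constructor
  · rintro ⟨h₁, h₂⟩
    rw [eq_div_iff hdet, eq_div_iff hdet]
    constructor
    · linear_combination d * h₁ - b * h₂
    · linear_combination a * h₂ - c * h₁
  · rintro ⟨rfl, rfl⟩
    constructor <;> rw [mul_div_assoc', mul_div_assoc', ← add_div, div_eq_iff hdet] <;> ring

theorem div_sq_add_div_sq_eq_one_iff {K : Type*} [Field K] {p q r : K} (hr : r ≠ 0) :
    (p / r) ^ 2 + (q / r) ^ 2 = 1 ↔ p ^ 2 + q ^ 2 = r ^ 2 := by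
  rw [div_pow, div_pow, ← add_div, div_eq_one_iff_eq (pow_ne_zero 2 hr)]

/-- The union of hyperplanes `{z₁ + x z₂ + y z₃ = 0}` over the real circle
`x² + y² = 1` coincides, where `s₃t₂ - s₂t₃ ≠ 0`, with the real algebraic set
`(s₃t₁ - s₁t₃)² + (s₂t₁ - s₁t₂)² = (s₃t₂ - s₂t₃)²`. -/
theorem stmt_14 (z₁ z₂ z₃ : ℂ)
    (hnd : z₃.re * z₂.im - z₂.re * z₃.im ≠ 0) :
    (∃ x y : ℝ, x^2 + y^2 = 1 ∧ z₁ + (x : ℂ) * z₂ + (y : ℂ) * z₃ = 0) ↔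
    (z₃.re * z₁.im - z₁.re * z₃.im)^2 + (z₂.re * z₁.im - z₁.re * z₂.im)^2
      = (z₃.re * z₂.im - z₂.re * z₃.im)^2 := by
  have hdet : z₂.re * z₃.im - z₃.re * z₂.im ≠ 0 := fun h => hnd (by linarith)
  simp only [Complex.add_ofReal_mul_add_ofReal_mul_eq_zero_iff,
    linear_system_two_iff_cramer hdet, exists_eq_right_right, exists_eq_right]
  rw [div_sq_add_div_sq_eq_one_iff hdet]
  constructor <;> intro h <;> linear_combination h
end

section
/- Let H ⊂ ℂ^n be the zero set of a real-analytic function ρ near a point p ∈ H at which H is a smooth real hypersurface of the form {Im z_1 = 0} in suitable local holomorphic coordinates centered at p. Then any holomorphic function f defined near p with f(p) = 0 and {f = 0} ⊆ H must vanish identically on {z_1 = 0}; i.e., the germ of a complex hypervariety through p contained in H is unique and equals the leaf {z_1 = 0}. -/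
/-!
Restrict `f` to the complex lines `F (z, t) = f (z, t • w)`. The zeros of `F` are real in `z`, so
`z ↦ F (z, 0)` is not identically zero and has an isolated zero of some order `m ≥ 1` at `0`.
For small `t` the power sums `p_k(t) = (2πi)⁻¹ ∮_{|z| = r} z ^ k ∂_z F / F dz` of the zeros of
`F (·, t)` in a fixed disc are holomorphic in `t` (argument principle) and real (the zeros are
real), hence constant: `p_0 = m ≥ 1` and `p_2 = 0`. Real numbers whose squares sum to `0` vanish,
so `F (·, t)` has a zero and it is `0`, i.e. `F (0, t) = 0`. The identity theorem in `t` gives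
`f (0, w) = 0`.
-/

open Complex Metric Set Filter Function MeasureTheory intervalIntegral Topology Real

theorem continuousOn_intervalIntegral_of_continuousOn {X V : Type*} [TopologicalSpace X]
    [NormedAddCommGroup V] [NormedSpace ℝ V]
    {G : X → ℝ → V} {s : Set X} (hG : ContinuousOn (uncurry G) (s ×ˢ univ)) (a b : ℝ) :
    ContinuousOn (fun x => ∫ θ in a..b, G x θ) s := by
  rw [continuousOn_iff_continuous_domRestrict]
  exact continuous_parametric_intervalIntegral_of_continuous' (f := fun (x : s) θ => G x θ)
    (hG.comp_continuous (continuous_subtype_val.prodMap continuous_id)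
      fun p => ⟨p.1.2, trivial⟩) a b

section

variable {E : Type*} [NormedAddCommGroup E] [NormedSpace ℂ E]

theorem continuousOn_cderiv {X : Type*} [TopologicalSpace X] {F : X → ℂ → E}
    {S : Set (X × ℂ)} (hF : ContinuousOn (uncurry F) S) {c : X → ℂ} (hc : Continuous c)
    {r : ℝ} (hr : 0 < r) {s : Set X} (hs : ∀ x ∈ s, ∀ w ∈ sphere (c x) r, (x, w) ∈ S) :
    ContinuousOn (fun x => cderiv r (F x) (c x)) s := by
  simp only [cderiv, circleIntegral, deriv_circleMap, circleMap_sub_center]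
  refine ContinuousOn.const_smul (continuousOn_intervalIntegral_of_continuousOn ?_ _ _) _
  have hcm : Continuous fun p : X × ℝ => circleMap (c p.1) r p.2 := by
    simp only [circleMap]; fun_prop
  have hinv : Continuous fun p : X × ℝ => (circleMap 0 r p.2 ^ 2)⁻¹ :=
    ((continuous_circleMap 0 r).comp continuous_snd).pow 2 |>.inv₀
      fun p => pow_ne_zero 2 (circleMap_ne_center hr.ne')
  refine ContinuousOn.smul (by fun_prop) (hinv.continuousOn.smul ?_)
  exact hF.comp (continuous_fst.prodMk hcm).continuousOn
    fun p hp => hs _ hp.1 _ (circleMap_mem_sphere _ hr.le _)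

theorem differentiableOn_intervalIntegral_of_continuousOn [CompleteSpace E] {T : Set ℂ}
    (hT : IsOpen T) {G : ℂ → ℝ → E} (hc : ContinuousOn (uncurry G) (T ×ˢ univ))
    (hd : ∀ θ, DifferentiableOn ℂ (G · θ) T) (a b : ℝ) :
    DifferentiableOn ℂ (fun t => ∫ θ in a..b, G t θ) T := by
  -- Differentiate under the integral sign; Cauchy's estimate bounds the derivatives `cderiv η`.
  intro t₀ ht₀
  obtain ⟨ε, hε, hball⟩ := Metric.isOpen_iff.1 hT t₀ ht₀
  set η := ε / 3 with hη
  have hη0 : 0 < η := by positivity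
  have hK : closedBall t₀ (2 * η) ⊆ T :=
    (closedBall_subset_ball (by linarith)).trans hball
  have hnear : ∀ t ∈ ball t₀ η, closedBall t η ⊆ closedBall t₀ (2 * η) := fun t ht =>
    closedBall_subset_closedBall' (by rw [mem_ball] at ht; linarith)
  obtain ⟨M, hM⟩ := IsCompact.exists_bound_of_continuousOn
    ((isCompact_closedBall t₀ (2 * η)).prod isCompact_uIcc) (hc.mono (prod_mono hK (subset_univ _)))
  have hcont : ∀ t ∈ T, Continuous (G t) := fun t ht =>
    continuousOn_univ.1 (hc.comp (Continuous.prodMk_right t).continuousOn fun θ _ => ⟨ht, trivial⟩)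
  have hderiv : Continuous fun θ => cderiv η (G · θ) t₀ := by
    rw [← continuousOn_univ]
    refine continuousOn_cderiv (F := fun θ t => G t θ) (S := univ ×ˢ T) ?_ continuous_const hη0
      fun θ _ w hw => ⟨trivial, hK (hnear t₀ (mem_ball_self hη0) (sphere_subset_closedBall hw))⟩
    exact hc.comp continuous_swap.continuousOn fun p hp => ⟨hp.2, trivial⟩
  refine (hasDerivAt_integral_of_dominated_loc_of_deriv_le (F' := fun t θ => cderiv η (G · θ) t)
    (bound := fun _ => M / η) (ball_mem_nhds t₀ hη0) ?_ ((hcont t₀ ht₀).intervalIntegrable _ _)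
    hderiv.aestronglyMeasurable ?_ intervalIntegrable_const ?_).2.differentiableAt
    |>.differentiableWithinAt
  · filter_upwards [hT.mem_nhds ht₀] with t ht
    exact (hcont t ht).aestronglyMeasurable
  · refine ae_of_all _ fun θ hθ t ht => norm_cderiv_le hη0 fun w hw => hM (w, θ) ⟨?_, ?_⟩
    · exact hnear t ht (sphere_subset_closedBall hw)
    · exact uIoc_subset_uIcc hθ
  · refine ae_of_all _ fun θ _ t ht => ?_
    rw [cderiv_eq_deriv hT (hd θ) hη0 ((hnear t ht).trans hK)]
    exact ((hd θ).differentiableAt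
      (hT.mem_nhds (hK (hnear t ht (mem_closedBall_self hη0.le))))).hasDerivAt

theorem differentiableOn_circleIntegral_of_continuousOn [CompleteSpace E] {T : Set ℂ}
    (hT : IsOpen T) {G : ℂ → ℂ → E} {c : ℂ} {r : ℝ} (hr : 0 ≤ r)
    (hc : ContinuousOn (uncurry G) (T ×ˢ sphere c r))
    (hd : ∀ z ∈ sphere c r, DifferentiableOn ℂ (G · z) T) :
    DifferentiableOn ℂ (fun t => ∮ z in C(c, r), G t z) T := by
  refine differentiableOn_intervalIntegral_of_continuousOn hT ?_
    (fun θ => (hd _ (circleMap_mem_sphere c hr θ)).const_smul _) _ _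
  simp only [deriv_circleMap]
  have hcm : Continuous fun p : ℂ × ℝ => circleMap c r p.2 := by
    simp only [circleMap]; fun_prop
  exact ContinuousOn.smul (by fun_prop) <| hc.comp (continuous_fst.prodMk hcm).continuousOn
    fun p hp => ⟨hp.1, circleMap_mem_sphere c hr p.2⟩

theorem differentiableOn_cderiv [CompleteSpace E] {T : Set ℂ} (hT : IsOpen T) {F : ℂ → ℂ → E}
    {z : ℂ} {r : ℝ} (hr : 0 < r) (hc : ContinuousOn (uncurry F) (T ×ˢ sphere z r))
    (hd : ∀ w ∈ sphere z r, DifferentiableOn ℂ (F · w) T) :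
    DifferentiableOn ℂ (fun t => cderiv r (F t) z) T := by
  refine DifferentiableOn.const_smul (differentiableOn_circleIntegral_of_continuousOn hT hr.le
    (G := fun t w => ((w - z) ^ 2)⁻¹ • F t w) ?_ fun w hw => (hd w hw).const_smul _) _
  refine ContinuousOn.smul ?_ hc
  refine ((continuous_snd.sub continuous_const).pow 2).continuousOn.inv₀ fun p hp => ?_
  exact pow_ne_zero 2 (sub_ne_zero.2 (ne_of_mem_sphere hp.2 hr.ne'))

end

theorem differentiableOn_circleIntegral_mul_logDeriv {W : Set (ℂ × ℂ)} (hW : IsOpen W)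
    {F : ℂ × ℂ → ℂ} (hF : DifferentiableOn ℂ F W) {φ : ℂ → ℂ} {c : ℂ} {r ρ : ℝ}
    (hφ : ContinuousOn φ (sphere c r)) (hr : 0 ≤ r) (hρ : 0 < ρ) {T : Set ℂ} (hT : IsOpen T)
    (hTW : closedBall c (r + ρ) ×ˢ T ⊆ W) (hnz : ∀ z ∈ sphere c r, ∀ t ∈ T, F (z, t) ≠ 0) :
    DifferentiableOn ℂ (fun t => ∮ z in C(c, r), φ z * logDeriv (fun w => F (w, t)) z) T := by
  have hball : ∀ z ∈ sphere c r, closedBall z ρ ⊆ closedBall c (r + ρ) := fun z hz =>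
    closedBall_subset_closedBall' (by rw [mem_sphere.1 hz]; linarith)
  have hsphere : sphere c r ⊆ closedBall c (r + ρ) :=
    sphere_subset_closedBall.trans (closedBall_subset_closedBall (by linarith))
  -- `∂_z F` as the Cauchy integral `cderiv ρ`, which is jointly continuous and holomorphic in `t`
  set D : ℂ → ℂ → ℂ := fun t z => cderiv ρ (fun w => F (w, t)) z
  have hslice : ∀ t, DifferentiableOn ℂ (fun w => F (w, t)) {w | (w, t) ∈ W} := fun t =>
    hF.comp (differentiableOn_id.prodMk (differentiableOn_const t)) fun w hw => hw
  have hlog : ∀ t ∈ T, ∀ z ∈ sphere c r, logDeriv (fun w => F (w, t)) z = D t z / F (z, t) := by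
    intro t ht z hz
    rw [logDeriv_apply, ← cderiv_eq_deriv (hW.preimage (Continuous.prodMk_left t)) (hslice t) hρ
      fun w hw => hTW ⟨hball z hz hw, ht⟩]
  refine DifferentiableOn.congr (f := fun t => ∮ z in C(c, r), φ z * (D t z / F (z, t))) ?_
    fun t ht => circleIntegral.integral_congr hr fun z hz => by simp only [hlog t ht z hz]
  have hFt : ∀ z ∈ closedBall c (r + ρ), DifferentiableOn ℂ (fun t => F (z, t)) T := fun z hz =>
    hF.comp ((differentiableOn_const z).prodMk differentiableOn_id) fun t ht => hTW ⟨hz, ht⟩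
  refine differentiableOn_circleIntegral_of_continuousOn hT hr ?_ fun z hz =>
    ((differentiableOn_cderiv hT hρ ?_ fun w hw => hFt w (hball z hz
      (sphere_subset_closedBall hw))).div (hFt z (hsphere hz)) (hnz z hz)).const_mul _
  · have hF₂ : ContinuousOn (uncurry fun (p : ℂ × ℂ) (w : ℂ) => F (w, p.1))
        {q : (ℂ × ℂ) × ℂ | (q.2, q.1.1) ∈ W} :=
      hF.continuousOn.comp
        (by fun_prop : Continuous fun q : (ℂ × ℂ) × ℂ => (q.2, q.1.1)).continuousOn fun _ hq => hq
    have hDc : ContinuousOn (fun p : ℂ × ℂ => D p.1 p.2) (T ×ˢ sphere c r) :=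
      continuousOn_cderiv hF₂ continuous_snd hρ
        fun p hp w hw => hTW ⟨hball _ hp.2 (sphere_subset_closedBall hw), hp.1⟩
    have hFc : ContinuousOn (fun p : ℂ × ℂ => F (p.2, p.1)) (T ×ˢ sphere c r) :=
      hF.continuousOn.comp continuous_swap.continuousOn fun p hp => hTW ⟨hsphere hp.2, hp.1⟩
    exact (hφ.comp continuous_snd.continuousOn fun p hp => hp.2).mul
      (hDc.div hFc fun p hp => hnz _ hp.2 _ hp.1)
  · exact hF.continuousOn.comp continuous_swap.continuousOn
      fun p hp => hTW ⟨hball z hz (sphere_subset_closedBall hp.2), hp.1⟩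
theorem AnalyticOnNhd.finite_inter_preimage_zero {g : ℂ → ℂ} {U K : Set ℂ}
    (hg : AnalyticOnNhd ℂ g U) (hU : IsPreconnected U) (hK : IsCompact K) (hKU : K ⊆ U)
    {z₀ : ℂ} (hz₀ : z₀ ∈ U) (hgz₀ : g z₀ ≠ 0) : (K ∩ g ⁻¹' {0}).Finite := by
  by_contra hinf
  obtain ⟨x, hxK, hx⟩ := Set.Infinite.exists_accPt_of_subset_isCompact hinf hK inter_subset_left
  have hfreq : ∃ᶠ z in 𝓝[≠] x, g z = 0 := (accPt_iff_frequently_nhdsNE.1 hx).mono fun _ hz => hz.2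
  exact hgz₀ (hg.eqOn_zero_of_preconnected_of_frequently_eq_zero hU (hKU hxK) hfreq hz₀)

theorem DifferentiableOn.exists_eq_sub_pow_mul {U : Set ℂ} (hU : IsOpen U) {g : ℂ → ℂ}
    (hg : DifferentiableOn ℂ g U) {ζ : ℂ} (hζ : ζ ∈ U) (hne : ¬ ∀ᶠ z in 𝓝 ζ, g z = 0) :
    ∃ k : ℕ, ∃ h : ℂ → ℂ, DifferentiableOn ℂ h U ∧ h ζ ≠ 0 ∧ ∀ z, g z = (z - ζ) ^ k * h z := by
  obtain ⟨k, hk⟩ := ENat.ne_top_iff_exists.1 fun h => hne (analyticOrderAt_eq_top.1 h)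
  obtain ⟨h₀, h₀a, h₀ne, hev⟩ :=
    (hg.analyticAt (hU.mem_nhds hζ)).analyticOrderAt_eq_natCast.1 hk.symm
  set h := update (fun z => g z / (z - ζ) ^ k) ζ (h₀ ζ)
  have hquot : ∀ z ≠ ζ, h z = g z / (z - ζ) ^ k := fun z hz => update_of_ne hz _ _
  have hloc : h =ᶠ[𝓝 ζ] h₀ := by
    filter_upwards [hev] with z hz
    rcases eq_or_ne z ζ with rfl | hzζ
    · simp [h]
    · rw [hquot z hzζ, hz, smul_eq_mul, mul_div_cancel_left₀ _ (pow_ne_zero _ (sub_ne_zero.2 hzζ))]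
  refine ⟨k, h, fun z hz => ?_, by simp [h, h₀ne], fun z => ?_⟩
  · rcases eq_or_ne z ζ with rfl | hzζ
    · exact (hloc.differentiableAt_iff.2 h₀a.differentiableAt).differentiableWithinAt
    · have hq : h =ᶠ[𝓝 z] fun w => g w / (w - ζ) ^ k := by
        filter_upwards [eventually_ne_nhds hzζ] with w hw using hquot w hw
      refine (hq.differentiableAt_iff.2 ?_).differentiableWithinAt
      exact (hg.differentiableAt (hU.mem_nhds hz)).div ((differentiableAt_id.sub_const ζ).pow k)
        (pow_ne_zero _ (sub_ne_zero.2 hzζ))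
  · rcases eq_or_ne z ζ with rfl | hzζ
    · simpa [h] using hev.self_of_nhds
    · rw [hquot z hzζ, mul_div_cancel₀ _ (pow_ne_zero _ (sub_ne_zero.2 hzζ))]

theorem logDeriv_sub_pow_mul {h : ℂ → ℂ} {ζ z : ℂ} (k : ℕ) (hz : z ≠ ζ) (hh : h z ≠ 0)
    (hd : DifferentiableAt ℂ h z) :
    logDeriv (fun w => (w - ζ) ^ k * h w) z = k * (z - ζ)⁻¹ + logDeriv h z := by
  have hsub : DifferentiableAt ℂ (fun w => w - ζ) z := differentiableAt_id.sub_const ζ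
  rw [logDeriv_mul (f := fun w => (w - ζ) ^ k) z (pow_ne_zero _ (sub_ne_zero.2 hz)) hh
    (hsub.pow k) hd, logDeriv_fun_pow hsub, logDeriv_apply, deriv_sub_const, deriv_id'', one_div]

theorem circleIntegral_mul_logDeriv_eq_zero {g φ : ℂ → ℂ} {c : ℂ} {r R : ℝ} (hr : 0 ≤ r)
    (hrR : r < R) (hg : DifferentiableOn ℂ g (ball c R)) (hnz : ∀ z ∈ closedBall c r, g z ≠ 0)
    (hφ : DifferentiableOn ℂ φ (closedBall c r)) :
    ∮ z in C(c, r), φ z * logDeriv g z = 0 := by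
  have hcb : closedBall c r ⊆ ball c R := closedBall_subset_ball hrR
  have han := hg.analyticOnNhd isOpen_ball
  refine circleIntegral_eq_zero_of_differentiable_on_off_countable hr countable_empty
    (hφ.continuousOn.mul ((han.deriv.continuousOn.mono hcb).div (hg.continuousOn.mono hcb) hnz))
    fun z hz => ?_
  have hzR : z ∈ ball c R := hcb (ball_subset_closedBall hz.1)
  exact (hφ.differentiableAt (closedBall_mem_nhds_of_mem hz.1)).mul
    ((han.deriv z hzR).differentiableAt.div (han z hzR).differentiableAt
      (hnz z (ball_subset_closedBall hz.1)))

theorem circleIntegral_mul_logDeriv_sub_pow_mul {h φ : ℂ → ℂ} {c ζ : ℂ} {r R : ℝ} (hr : 0 ≤ r)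
    (hrR : r < R) (hh : DifferentiableOn ℂ h (ball c R)) (hsp : ∀ z ∈ sphere c r, h z ≠ 0)
    (hζ : ζ ∈ ball c r) (hφ : DifferentiableOn ℂ φ (closedBall c r)) (k : ℕ) :
    ∮ z in C(c, r), φ z * logDeriv (fun w => (w - ζ) ^ k * h w) z =
      2 * π * I * (k * φ ζ) + ∮ z in C(c, r), φ z * logDeriv h z := by
  have hsR : sphere c r ⊆ ball c R := sphere_subset_closedBall.trans (closedBall_subset_ball hrR)
  have hφs : ContinuousOn φ (sphere c r) := hφ.continuousOn.mono sphere_subset_closedBall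
  have hζsp : ∀ z ∈ sphere c r, z - ζ ≠ 0 := fun z hz => sub_ne_zero.2 fun hzζ =>
    (mem_ball.1 hζ).ne (hzζ ▸ mem_sphere.1 hz)
  have hsplit : ∀ z ∈ sphere c r, φ z * logDeriv (fun w => (w - ζ) ^ k * h w) z =
      k * ((z - ζ)⁻¹ • φ z) + φ z * logDeriv h z := by
    intro z hz
    rw [logDeriv_sub_pow_mul k (sub_ne_zero.1 (hζsp z hz)) (hsp z hz)
      (hh.differentiableAt (isOpen_ball.mem_nhds (hsR hz))), smul_eq_mul]
    ring
  have hint₁ : CircleIntegrable (fun z => k * ((z - ζ)⁻¹ • φ z)) c r :=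
    (continuousOn_const.mul (((continuousOn_id.sub continuousOn_const).inv₀ hζsp).smul
      hφs)).circleIntegrable hr
  have hint₂ : CircleIntegrable (fun z => φ z * logDeriv h z) c r :=
    (hφs.mul (((hh.analyticOnNhd isOpen_ball).deriv.continuousOn.mono hsR).div
      (hh.continuousOn.mono hsR) hsp)).circleIntegrable hr
  rw [circleIntegral.integral_congr hr hsplit, circleIntegral.integral_add hint₁ hint₂,
    circleIntegral.integral_const_mul, hφ.circleIntegral_sub_inv_smul hζ, smul_eq_mul]
  ring

theorem exists_multiset_circleIntegral_mul_logDeriv {g : ℂ → ℂ} {c : ℂ} {r R : ℝ} (hr : 0 ≤ r)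
    (hrR : r < R) (hg : DifferentiableOn ℂ g (ball c R)) (hsp : ∀ z ∈ sphere c r, g z ≠ 0) :
    ∃ M : Multiset ℂ, (∀ ζ ∈ M, ζ ∈ ball c r ∧ g ζ = 0) ∧ (∀ z ∈ ball c r, g z = 0 → z ∈ M) ∧
      ∀ φ : ℂ → ℂ, DifferentiableOn ℂ φ (closedBall c r) →
        ∮ z in C(c, r), φ z * logDeriv g z = 2 * π * I * (M.map φ).sum := by
  have hcb : closedBall c r ⊆ ball c R := closedBall_subset_ball hrR
  have hc : c + r ∈ sphere c r := by simp [abs_of_nonneg hr]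
  have hfin : (ball c r ∩ g ⁻¹' {0}).Finite :=
    ((hg.analyticOnNhd isOpen_ball).finite_inter_preimage_zero (convex_ball c R).isPreconnected
      (isCompact_closedBall c r) hcb (hcb (sphere_subset_closedBall hc)) (hsp _ hc)).subset
      (inter_subset_inter_left _ ball_subset_closedBall)
  -- Induction on the zero set, dividing out one zero with its multiplicity at a time.
  suffices H : ∀ S : Finset ℂ, ∀ h : ℂ → ℂ, DifferentiableOn ℂ h (ball c R) →
      (∀ z ∈ sphere c r, h z ≠ 0) → ball c r ∩ h ⁻¹' {0} = S →
      ∃ M : Multiset ℂ, (∀ ζ ∈ M, ζ ∈ ball c r ∧ h ζ = 0) ∧ (∀ z ∈ ball c r, h z = 0 → z ∈ M) ∧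
        ∀ φ : ℂ → ℂ, DifferentiableOn ℂ φ (closedBall c r) →
          ∮ z in C(c, r), φ z * logDeriv h z = 2 * π * I * (M.map φ).sum from
    H _ g hg hsp hfin.coe_toFinset.symm
  intro S
  induction S using Finset.induction_on with
  | empty =>
    intro h hh hsp hS
    have hnz : ∀ z ∈ closedBall c r, h z ≠ 0 := by
      intro z hz hz0
      rcases (mem_closedBall.1 hz).lt_or_eq with hlt | heq
      · simpa using hS.subset ⟨mem_ball.2 hlt, hz0⟩
      · exact hsp z (mem_sphere.2 heq) hz0
    refine ⟨0, by simp, fun z hz hz0 => absurd hz0 (hnz z (ball_subset_closedBall hz)),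
      fun φ hφ => ?_⟩
    simpa using circleIntegral_mul_logDeriv_eq_zero hr hrR hh hnz hφ
  | insert ζ S hζS ih =>
    intro h hh hsp hS
    obtain ⟨hζr, hζ0⟩ : ζ ∈ ball c r ∧ h ζ = 0 := by
      simpa using hS.symm.subset (Finset.mem_coe.2 (Finset.mem_insert_self ζ S))
    have hne : ¬ ∀ᶠ z in 𝓝 ζ, h z = 0 := fun hev =>
      hsp _ hc ((hh.analyticOnNhd isOpen_ball).eqOn_zero_of_preconnected_of_eventuallyEq_zero
        (convex_ball c R).isPreconnected (hcb (ball_subset_closedBall hζr)) hev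
        (hcb (sphere_subset_closedBall hc)))
    obtain ⟨k, h₁, hh₁, hh₁ζ, hfac⟩ :=
      hh.exists_eq_sub_pow_mul isOpen_ball (hcb (ball_subset_closedBall hζr)) hne
    obtain rfl : h = fun w => (w - ζ) ^ k * h₁ w := funext hfac
    have hk : k ≠ 0 := by
      rintro rfl
      exact hh₁ζ (by simpa using hζ0)
    have hzero : ∀ z ≠ ζ, (z - ζ) ^ k * h₁ z = 0 ↔ h₁ z = 0 := fun z hz => by
      rw [mul_eq_zero, or_iff_right (pow_ne_zero _ (sub_ne_zero.2 hz))]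
    have hsp₁ : ∀ z ∈ sphere c r, h₁ z ≠ 0 := fun z hz h0 => hsp z hz (by simp [h0])
    have hS₁ : ball c r ∩ h₁ ⁻¹' {0} = S := by
      ext z
      rcases eq_or_ne z ζ with rfl | hzζ
      · simp [hh₁ζ, hζS]
      · have := Set.ext_iff.1 hS z
        simp only [mem_inter_iff, mem_preimage, mem_singleton_iff, Finset.coe_insert,
          mem_insert_iff, hzζ, false_or, Finset.mem_coe, hzero z hzζ] at this ⊢
        exact this
    obtain ⟨M, hM, hMS, hMint⟩ := ih h₁ hh₁ hsp₁ hS₁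
    refine ⟨Multiset.replicate k ζ + M, fun ξ hξ => ?_, fun z hz hz0 => ?_, fun φ hφ => ?_⟩
    · rcases Multiset.mem_add.1 hξ with hξ | hξ
      · rw [Multiset.eq_of_mem_replicate hξ]
        exact ⟨hζr, hζ0⟩
      · exact ⟨(hM ξ hξ).1, by simp [(hM ξ hξ).2]⟩
    · rcases eq_or_ne z ζ with rfl | hzζ
      · exact Multiset.mem_add.2 (Or.inl (Multiset.mem_replicate.2 ⟨hk, rfl⟩))
      · exact Multiset.mem_add.2 (Or.inr (hMS z hz ((hzero z hzζ).1 hz0)))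
    rw [circleIntegral_mul_logDeriv_sub_pow_mul hr hrR hh₁ hsp₁ hζr hφ, hMint φ hφ]
    simp only [Multiset.map_add, Multiset.map_replicate, Multiset.sum_add, Multiset.sum_replicate,
      nsmul_eq_mul]
    ring

theorem DifferentiableOn.eq_of_forall_im_eq_zero {g : ℂ → ℂ} {T : Set ℂ} (hT : IsOpen T)
    (hTc : IsPreconnected T) (hg : DifferentiableOn ℂ g T) (him : ∀ t ∈ T, (g t).im = 0)
    {t₀ t : ℂ} (ht₀ : t₀ ∈ T) (ht : t ∈ T) : g t = g t₀ := by
  rcases (hg.analyticOnNhd hT).is_constant_or_isOpen hTc with ⟨w, hw⟩ | hopen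
  · rw [hw t ht, hw t₀ ht₀]
  obtain ⟨ε, hε, hball⟩ := Metric.isOpen_iff.1 (hopen T subset_rfl hT) _ (mem_image_of_mem g ht₀)
  have hmem : g t₀ + (ε / 2 : ℝ) * I ∈ ball (g t₀) ε := by
    simp [abs_of_pos hε, hε]
  obtain ⟨s, hs, hgs⟩ := hball hmem
  have := him s hs
  simp [hgs, him t₀ ht₀] at this
  linarith

theorem Multiset.im_sum_map_pow_eq_zero {M : Multiset ℂ} (hM : ∀ ζ ∈ M, ζ.im = 0) (k : ℕ) :
    ((M.map (· ^ k)).sum).im = 0 := by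
  induction M using Multiset.induction_on with
  | empty => simp
  | cons a M ih =>
    simp only [Multiset.mem_cons, forall_eq_or_imp] at hM
    rw [Multiset.map_cons, Multiset.sum_cons, add_im, ih hM.2, ← re_add_im a, hM.1]
    simp [← ofReal_pow]

theorem Multiset.forall_eq_zero_of_sum_map_sq_eq_zero {M : Multiset ℂ}
    (hM : ∀ ζ ∈ M, ζ.im = 0) (h : (M.map (· ^ 2)).sum = 0) : ∀ ζ ∈ M, ζ = 0 := by
  have hre : (M.map fun ζ => ζ.re ^ 2).sum = 0 := by
    have := congrArg reAddGroupHom h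
    rw [map_multiset_sum, Multiset.map_map, _root_.map_zero] at this
    rw [← this]
    refine congrArg Multiset.sum (Multiset.map_congr rfl fun ζ hζ => ?_)
    simp [sq, hM ζ hζ]
  intro ζ hζ
  have hle := Multiset.single_le_sum (fun x hx => by
      obtain ⟨y, -, rfl⟩ := Multiset.mem_map.1 hx
      positivity) _ (Multiset.mem_map_of_mem (fun ζ => ζ.re ^ 2) hζ)
  refine Complex.ext ?_ (hM ζ hζ)
  exact pow_eq_zero_iff two_ne_zero |>.1 (le_antisymm (hre ▸ hle) (sq_nonneg _))

theorem Multiset.zero_mem_of_sum_map_pow_eq {M M₀ : Multiset ℂ} (hM : ∀ ζ ∈ M, ζ.im = 0)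
    (hM₀ : ∀ ζ ∈ M₀, ζ = 0) (h0 : (0 : ℂ) ∈ M₀)
    (hp : ∀ k : ℕ, (M.map (· ^ k)).sum = (M₀.map (· ^ k)).sum) : (0 : ℂ) ∈ M := by
  have hM0 : ∀ ζ ∈ M, ζ = 0 := by
    refine Multiset.forall_eq_zero_of_sum_map_sq_eq_zero hM ?_
    rw [hp 2]
    exact Multiset.sum_eq_zero fun x hx => by
      obtain ⟨ζ, hζ, rfl⟩ := Multiset.mem_map.1 hx
      simp [hM₀ ζ hζ]
  have hcard : Multiset.card M = Multiset.card M₀ := by simpa using hp 0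
  obtain ⟨ζ, hζ⟩ := Multiset.card_pos_iff_exists_mem.1
    (hcard ▸ Multiset.card_pos_iff_exists_mem.2 ⟨0, h0⟩)
  exact hM0 ζ hζ ▸ hζ

/-- By the argument principle (`exists_multiset_zeroPowerSum_eq`), the sum of the `k`-th powers
of the zeros of `g` in `ball c r`, counted with multiplicity. -/
noncomputable def zeroPowerSum (g : ℂ → ℂ) (c : ℂ) (r : ℝ) (k : ℕ) : ℂ :=
  (2 * π * I)⁻¹ * ∮ z in C(c, r), z ^ k * logDeriv g z

theorem exists_multiset_zeroPowerSum_eq {g : ℂ → ℂ} {c : ℂ} {r R : ℝ} (hr : 0 ≤ r)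
    (hrR : r < R) (hg : DifferentiableOn ℂ g (ball c R)) (hsp : ∀ z ∈ sphere c r, g z ≠ 0) :
    ∃ M : Multiset ℂ, (∀ ζ ∈ M, ζ ∈ ball c r ∧ g ζ = 0) ∧ (∀ z ∈ ball c r, g z = 0 → z ∈ M) ∧
      ∀ k, zeroPowerSum g c r k = (M.map (· ^ k)).sum := by
  obtain ⟨M, hM, hMz, hint⟩ := exists_multiset_circleIntegral_mul_logDeriv hr hrR hg hsp
  refine ⟨M, hM, hMz, fun k => ?_⟩
  rw [zeroPowerSum, hint _ (differentiable_pow k).differentiableOn, ← mul_assoc,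
    inv_mul_cancel₀ two_pi_I_ne_zero, one_mul]

theorem zeroPowerSum_eq_of_zeros_im_eq_zero {W : Set (ℂ × ℂ)} (hW : IsOpen W) {F : ℂ × ℂ → ℂ}
    (hF : DifferentiableOn ℂ F W) {c : ℂ} {r ρ : ℝ} (hr : 0 ≤ r) (hρ : 0 < ρ) {T : Set ℂ}
    (hT : IsOpen T) (hTc : IsPreconnected T) (hTW : closedBall c (r + ρ) ×ˢ T ⊆ W)
    (hnz : ∀ z ∈ sphere c r, ∀ t ∈ T, F (z, t) ≠ 0)
    (hreal : ∀ z ∈ ball c r, ∀ t ∈ T, F (z, t) = 0 → z.im = 0) (k : ℕ) {t₀ t : ℂ}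
    (ht₀ : t₀ ∈ T) (ht : t ∈ T) :
    zeroPowerSum (fun z => F (z, t)) c r k = zeroPowerSum (fun z => F (z, t₀)) c r k := by
  refine DifferentiableOn.eq_of_forall_im_eq_zero
    (g := fun t => zeroPowerSum (fun z => F (z, t)) c r k) hT hTc ?_ (fun s hs => ?_) ht₀ ht
  · exact (differentiableOn_circleIntegral_mul_logDeriv hW hF (continuous_pow k).continuousOn
      hr hρ hT hTW hnz).const_mul _
  · have hslice : DifferentiableOn ℂ (fun z => F (z, s)) (ball c (r + ρ)) :=
      hF.comp (differentiableOn_id.prodMk (differentiableOn_const s))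
        fun z hz => hTW ⟨ball_subset_closedBall hz, hs⟩
    obtain ⟨M, hM, -, hsum⟩ := exists_multiset_zeroPowerSum_eq hr (lt_add_of_pos_right r hρ)
      hslice fun z hz => hnz z hz s hs
    rw [hsum k]
    exact Multiset.im_sum_map_pow_eq_zero (fun ζ hζ => hreal ζ (hM ζ hζ).1 s hs (hM ζ hζ).2) k

theorem eventually_ne_zero_of_zeros_im_eq_zero {W : Set (ℂ × ℂ)} (hW : IsOpen W)
    (h0 : (0 : ℂ × ℂ) ∈ W) {F : ℂ × ℂ → ℂ} (hF : DifferentiableOn ℂ F W)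
    (hsub : ∀ p ∈ W, F p = 0 → p.1.im = 0) : ∀ᶠ z in 𝓝[≠] (0 : ℂ), F (z, 0) ≠ 0 := by
  have hW₀ : IsOpen {z : ℂ | (z, (0 : ℂ)) ∈ W} := hW.preimage (Continuous.prodMk_left 0)
  have hψ : AnalyticAt ℂ (fun z => F (z, 0)) 0 :=
    (hF.comp (differentiableOn_id.prodMk (differentiableOn_const 0)) fun z hz => hz).analyticAt
      (hW₀.mem_nhds h0)
  refine hψ.eventually_eq_zero_or_eventually_ne_zero.resolve_left fun hev => ?_
  have hI : Tendsto (fun y : ℝ => I * y) (𝓝[≠] 0) (𝓝 0) :=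
    ((continuous_const.mul continuous_ofReal).tendsto' 0 0 (by simp)).mono_left nhdsWithin_le_nhds
  obtain ⟨y, ⟨hy0, hyW⟩, hy⟩ :=
    ((hI.eventually (hev.and (hW₀.mem_nhds h0))).and self_mem_nhdsWithin).exists
  exact hy (by simpa using hsub _ hyW hy0)

/-- The margin `r + r` leaves room for the Cauchy circles of radius `r` around `sphere 0 r`. -/
theorem exists_radii_of_eventually_ne_zero {W : Set (ℂ × ℂ)} (hW : IsOpen W)
    (h0 : (0 : ℂ × ℂ) ∈ W) {F : ℂ × ℂ → ℂ} (hF : ContinuousOn F W)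
    (hψ : ∀ᶠ z in 𝓝[≠] (0 : ℂ), F (z, 0) ≠ 0) :
    ∃ r δ : ℝ, 0 < r ∧ 0 < δ ∧ closedBall (0 : ℂ) (r + r) ×ˢ ball 0 δ ⊆ W ∧
      (∀ z ∈ closedBall (0 : ℂ) r, z ≠ 0 → F (z, 0) ≠ 0) ∧
      ∀ z ∈ sphere (0 : ℂ) r, ∀ t ∈ ball (0 : ℂ) δ, F (z, t) ≠ 0 := by
  obtain ⟨R, hR, hRW⟩ := Metric.isOpen_iff.1 hW 0 h0
  replace hRW : ball (0 : ℂ) R ×ˢ ball (0 : ℂ) R ⊆ W := by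
    rw [ball_prod_same]
    exact hRW
  obtain ⟨r₁, hr₁, hψ⟩ := Metric.eventually_nhds_iff_ball.1 (eventually_nhdsWithin_iff.1 hψ)
  set r := min (r₁ / 2) (R / 3)
  have hr : 0 < r := by positivity
  have hψr : ∀ z ∈ closedBall (0 : ℂ) r, z ≠ 0 → F (z, 0) ≠ 0 := fun z hz =>
    hψ z (closedBall_subset_ball (by linarith [min_le_left (r₁ / 2) (R / 3)]) hz)
  have hrR : closedBall (0 : ℂ) (r + r) ⊆ ball 0 R :=
    closedBall_subset_ball (by linarith [min_le_right (r₁ / 2) (R / 3)])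
  have htube : ∀ᶠ t in 𝓝 (0 : ℂ), ∀ z ∈ sphere (0 : ℂ) r, F (z, t) ≠ 0 := by
    refine (isCompact_sphere 0 r).eventually_forall_of_forall_eventually fun z hz => ?_
    have hzW : (z, (0 : ℂ)) ∈ W := hRW ⟨hrR (sphere_subset_closedBall.trans
      (closedBall_subset_closedBall (by linarith)) hz), mem_ball_self hR⟩
    have hcont : ContinuousAt (fun q : ℂ × ℂ => F (q.2, q.1)) (0, z) :=
      (hF.continuousAt (hW.mem_nhds hzW)).comp (f := Prod.swap) continuous_swap.continuousAt
    exact hcont.eventually_ne (hψr z (sphere_subset_closedBall hz) (ne_of_mem_sphere hz hr.ne'))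
  obtain ⟨δ, hδ, hT⟩ := Metric.eventually_nhds_iff_ball.1 (htube.and (ball_mem_nhds 0 hR))
  exact ⟨r, δ, hr, hδ, fun p hp => hRW ⟨hrR hp.1, (hT p.2 hp.2).2⟩, hψr,
    fun z hz t ht => (hT t ht).1 z hz⟩

theorem eventually_apply_zero_eq_zero_of_zeros_im_eq_zero {W : Set (ℂ × ℂ)} (hW : IsOpen W)
    (h0 : (0 : ℂ × ℂ) ∈ W) {F : ℂ × ℂ → ℂ} (hF : DifferentiableOn ℂ F W) (hF0 : F 0 = 0)
    (hsub : ∀ p ∈ W, F p = 0 → p.1.im = 0) : ∀ᶠ t in 𝓝 (0 : ℂ), F (0, t) = 0 := by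
  obtain ⟨r, δ, hr, hδ, hTW, hψr, hnz⟩ := exists_radii_of_eventually_ne_zero hW h0
    hF.continuousOn (eventually_ne_zero_of_zeros_im_eq_zero hW h0 hF hsub)
  have hslice : ∀ t ∈ ball (0 : ℂ) δ, DifferentiableOn ℂ (fun z => F (z, t)) (ball 0 (r + r)) :=
    fun t ht => hF.comp (differentiableOn_id.prodMk (differentiableOn_const t))
      fun z hz => hTW ⟨ball_subset_closedBall hz, ht⟩
  have hreal : ∀ z ∈ ball (0 : ℂ) r, ∀ t ∈ ball (0 : ℂ) δ, F (z, t) = 0 → z.im = 0 :=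
    fun z hz t ht => hsub _ (hTW ⟨closedBall_subset_closedBall (by linarith)
      (ball_subset_closedBall hz), ht⟩)
  have hsum := fun k t (ht : t ∈ ball (0 : ℂ) δ) => zeroPowerSum_eq_of_zeros_im_eq_zero hW hF
    hr.le hr isOpen_ball (convex_ball 0 δ).isPreconnected hTW hnz hreal k (mem_ball_self hδ) ht
  obtain ⟨M₀, hM₀, hM₀z, hM₀s⟩ := exists_multiset_zeroPowerSum_eq hr.le (by linarith)
    (hslice 0 (mem_ball_self hδ)) fun z hz => hnz z hz 0 (mem_ball_self hδ)
  have hM₀0 : ∀ ζ ∈ M₀, ζ = 0 := fun ζ hζ => by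
    by_contra h
    exact hψr ζ (ball_subset_closedBall (hM₀ ζ hζ).1) h (hM₀ ζ hζ).2
  filter_upwards [ball_mem_nhds (0 : ℂ) hδ] with t ht
  obtain ⟨M, hM, -, hMs⟩ := exists_multiset_zeroPowerSum_eq hr.le (by linarith) (hslice t ht)
    fun z hz => hnz z hz t ht
  have h0M : (0 : ℂ) ∈ M := Multiset.zero_mem_of_sum_map_pow_eq
    (fun ζ hζ => hreal ζ (hM ζ hζ).1 t ht (hM ζ hζ).2) hM₀0 (hM₀z 0 (mem_ball_self hr) hF0)
    fun k => by rw [← hMs k, hsum k t ht, hM₀s k]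
  exact (hM 0 h0M).2

/-- Uniqueness of the complex hypervariety through a smooth point of a
Levi-flat hypersurface `{Im z₁ = 0}`: if `f` is holomorphic near `0`, `f(0)=0`
and `{f = 0} ⊆ {Im z₁ = 0}`, then `f` vanishes on `{z₁ = 0}` near `0`. -/
theorem stmt_18 (n : ℕ) (U : Set (ℂ × (Fin n → ℂ))) (hU : IsOpen U)
    (h0 : (0 : ℂ × (Fin n → ℂ)) ∈ U)
    (f : ℂ × (Fin n → ℂ) → ℂ) (hf : DifferentiableOn ℂ f U)
    (hf0 : f 0 = 0)
    (hsub : ∀ z ∈ U, f z = 0 → z.1.im = 0) :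
    ∃ V ∈ nhds (0 : ℂ × (Fin n → ℂ)), ∀ z ∈ V, z.1 = 0 → f z = 0 := by
  obtain ⟨ρ, hρ, hρU⟩ := Metric.isOpen_iff.1 hU 0 h0
  refine ⟨ball 0 ρ, ball_mem_nhds 0 hρ, ?_⟩
  rintro ⟨z₁, w⟩ hz (rfl : z₁ = 0)
  have hline : ∀ᶠ t in 𝓝 (0 : ℂ), f (0, t • w) = 0 :=
    eventually_apply_zero_eq_zero_of_zeros_im_eq_zero (F := fun p : ℂ × ℂ => f (p.1, p.2 • w))
      (hU.preimage (by fun_prop)) (by simpa [Prod.zero_eq_mk] using h0)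
      (hf.comp (by fun_prop : Differentiable ℂ fun p : ℂ × ℂ => (p.1, p.2 • w)).differentiableOn
        fun p hp => hp) (by simpa [Prod.zero_eq_mk] using hf0) fun p hp => hsub _ hp
  have hlin : IsLinearMap ℝ fun t : ℂ => ((0 : ℂ), t • w) :=
    ⟨fun s t => by simp [add_smul], fun a t => by simp [mul_smul, Complex.coe_smul]⟩
  set S := (fun t : ℂ => ((0 : ℂ), t • w)) ⁻¹' ball 0 ρ
  have hdiff : DifferentiableOn ℂ (fun t : ℂ => f (0, t • w)) S :=
    hf.comp (by fun_prop : Differentiable ℂ fun t : ℂ => ((0 : ℂ), t • w)).differentiableOn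
      fun t ht => hρU ht
  have h0S : (0 : ℂ) ∈ S := by simpa [S] using hρ
  have h1S : (1 : ℂ) ∈ S := by simpa [S] using hz
  simpa using (hdiff.analyticOnNhd (isOpen_ball.preimage (by fun_prop)))
    |>.eqOn_zero_of_preconnected_of_eventuallyEq_zero
      ((convex_ball _ ρ).is_linear_preimage hlin).isPreconnected h0S hline h1S
end
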